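/- arXiv:2105.03028 — 2 statements merged into one kernel-verified Lean document; each statement's English description precedes it below -/
import Mathlib

section
/- Let X and Y be binary strings of equal length m over {0,1}. Suppose 1(X) = αm, 0(Y) = αm, 1(L_Y) ≤ (α/2 + β)m, 1(R_Y) ≤ (α/2 + β)m, 0(L_X) > (α/2 + 2β)m, 0(R_X) > (α/2 + 2β)m, and 0(Y) < (1/2 − 10β)m, where L_S and R_S denote the prefix and suffix of S of length αm respectively, and M_S their complement. Then min(0(L_X),0(L_Y)) + min(1(M_X),1(M_Y)) + min(0(R_X),0(R_Y)) > (α + 2β)m; i.e., combining three unary matchings yields a common subsequence of length greater than (α + 2β)m. -/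
lemma count_tf (l : List Bool) : l.count true + l.count false = l.length := by
  induction l with
  | nil => simp
  | cons h t ih => cases h <;> simp [List.count_cons] <;> omega

lemma split_count (Z : List Bool) (m a : ℕ) (hZ : Z.length = m) (ham : 2 * a ≤ m)
    (b : Bool) :
    Z.count b = (Z.take a).count b + ((Z.drop a).take (m - 2*a)).count b
      + (Z.drop (m - a)).count b := by
  have hdd : (Z.drop a).drop (m - 2*a) = Z.drop (m - a) := by
    rw [List.drop_drop]; congr 1; omega
  have key : Z = Z.take a ++ ((Z.drop a).take (m - 2*a) ++ Z.drop (m - a)) := by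
    rw [← hdd, List.take_append_drop, List.take_append_drop]
  nth_rewrite 1 [key]
  simp [List.count_append]
  ring

theorem three_matchings_case3 (X Y : List Bool) (m a : ℕ) (α β : ℝ)
    (hα : 0 < α) (hβ : 0 < β)
    (hX : X.length = m) (hY : Y.length = m)
    (ha : (a : ℝ) = α * m) (ham : 2 * a ≤ m)
    (h1X : (X.count true : ℝ) = α * m)
    (h0Y : (Y.count false : ℝ) = α * m)
    (h1LY : ((Y.take a).count true : ℝ) ≤ (α / 2 + β) * m)
    (h1RY : ((Y.drop (m - a)).count true : ℝ) ≤ (α / 2 + β) * m)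
    (h0LX : ((X.take a).count false : ℝ) > (α / 2 + 2 * β) * m)
    (h0RX : ((X.drop (m - a)).count false : ℝ) > (α / 2 + 2 * β) * m)
    (h0Ysmall : (Y.count false : ℝ) < (1 / 2 - 10 * β) * m) :
    (min ((X.take a).count false) ((Y.take a).count false) : ℝ) +
      (min (((X.drop a).take (m - 2 * a)).count true)
           (((Y.drop a).take (m - 2 * a)).count true) : ℝ) +
      (min ((X.drop (m - a)).count false) ((Y.drop (m - a)).count false) : ℝ) >
      (α + 2 * β) * m := by
  -- m > 0
  have hm0 : (0:ℝ) < (m:ℝ) := by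
    rcases Nat.eq_zero_or_pos m with h | h
    · exfalso; subst h; simp at h0Ysmall
      exact absurd h0Ysmall (Nat.cast_nonneg _).not_gt
    · exact_mod_cast h
  have halpha : α ≤ 1/2 := by
    have h2a : ((2*a : ℕ) : ℝ) ≤ (m:ℝ) := by exact_mod_cast ham
    push_cast at h2a
    nlinarith [h2a, hm0, ha]
  have haM : a ≤ m := by omega
  have hbm : (0:ℝ) < β * m := mul_pos hβ hm0
  have h2a : (2*(a:ℝ)) ≤ (m:ℝ) := by exact_mod_cast ham
  -- length facts
  have lLY : (Y.take a).length = a := by rw [List.length_take, hY]; omega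
  have lRY : (Y.drop (m-a)).length = a := by rw [List.length_drop, hY]; omega
  have lLX : (X.take a).length = a := by rw [List.length_take, hX]; omega
  have lRX : (X.drop (m-a)).length = a := by rw [List.length_drop, hX]; omega
  -- count true + count false = length
  have e1 := count_tf (Y.take a); rw [lLY] at e1
  have e2 := count_tf (Y.drop (m-a)); rw [lRY] at e2
  have e3 := count_tf (X.take a); rw [lLX] at e3
  have e4 := count_tf (X.drop (m-a)); rw [lRX] at e4
  have e5 := count_tf Y; rw [hY] at e5
  -- splits
  have sX := split_count X m a hX ham true
  have sY := split_count Y m a hY ham true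
  -- cast to ℝ
  have E1 : ((Y.take a).count true : ℝ) + ((Y.take a).count false : ℝ) = a := by
    exact_mod_cast e1
  have E2 : ((Y.drop (m-a)).count true : ℝ) + ((Y.drop (m-a)).count false : ℝ) = a := by
    exact_mod_cast e2
  have E3 : ((X.take a).count true : ℝ) + ((X.take a).count false : ℝ) = a := by
    exact_mod_cast e3
  have E4 : ((X.drop (m-a)).count true : ℝ) + ((X.drop (m-a)).count false : ℝ) = a := by
    exact_mod_cast e4
  have E5 : ((Y.count true : ℝ)) + (Y.count false : ℝ) = m := by exact_mod_cast e5
  have SX : (X.count true : ℝ) = ((X.take a).count true : ℝ)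
      + (((X.drop a).take (m - 2*a)).count true : ℝ)
      + ((X.drop (m-a)).count true : ℝ) := by exact_mod_cast sX
  have SY : (Y.count true : ℝ) = ((Y.take a).count true : ℝ)
      + (((Y.drop a).take (m - 2*a)).count true : ℝ)
      + ((Y.drop (m-a)).count true : ℝ) := by exact_mod_cast sY
  have A1 : ((α/2 - β)*m : ℝ) ≤ min ((X.take a).count false : ℝ) ((Y.take a).count false : ℝ) := by
    apply le_min
    · linarith
    · linarith
  have A3 : ((α/2 - β)*m : ℝ) ≤ min ((X.drop (m-a)).count false : ℝ) ((Y.drop (m-a)).count false : ℝ) := by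
    apply le_min
    · linarith
    · linarith
  have A2 : (4*β*m : ℝ) < min (((X.drop a).take (m - 2*a)).count true : ℝ)
      (((Y.drop a).take (m - 2*a)).count true : ℝ) := by
    apply lt_min
    · -- 1(M_X) = 1(X) - 1(L_X) - 1(R_X) > αm - 2(α/2-2β)m = 4βm
      linarith
    · -- 1(M_Y) = 1(Y) - 1(L_Y) - 1(R_Y) > (1/2+10β)m - 2(α/2+β)m ≥ 8βm > 4βm
      linarith
  linarith
end

section
/- Suppose there is an algorithm achieving a 1/(ℓ−ε) approximation for LCS on strings over alphabets of size ℓ. Then for strings A, B over an alphabet of size s > ℓ, taking the maximum over all ℓ-element subalphabets y of a 1/(ℓ−ε)-approximate LCS of the restrictions of A and B to y yields a common subsequence of A and B of length at least lcs(A,B)/(s(1 − ε/ℓ)). -/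
/-!
Fix a longest common subsequence `C` of `A` and `B`. Averaged over all `ℓ`-element subalphabets
`y ⊆ Σ`, the restriction of `C` to `y` keeps a fraction `ℓ / s` of its letters, since every symbol
lies in the same number `(s - 1).choose (ℓ - 1)` of them; so some `y` keeps at least `(ℓ / s) |C|`,
and these letters form a common subsequence of the restrictions of `A` and `B` to `y`. The bound
follows from `ℓ / (s (ℓ - ε)) = 1 / (s (1 - ε / ℓ))`.
-/

noncomputable def lcsLen {α : Type*} (X Y : List α) : ℕ :=
  sSup {n | ∃ C : List α, C.Sublist X ∧ C.Sublist Y ∧ C.length = n}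

open Finset

namespace Finset

variable {α M : Type*} [DecidableEq α] [AddCommMonoid M]

theorem sum_powersetCard_sum_eq (S : Finset α) (w : α → M) {n : ℕ} (hn : n ≠ 0) :
    ∑ y ∈ S.powersetCard n, ∑ a ∈ y, w a = (#S - 1).choose (n - 1) • ∑ a ∈ S, w a := by
  have hcount : ∀ a ∈ S, #{y ∈ S.powersetCard n | a ∈ y} = (#S - 1).choose (n - 1) := by
    intro a ha
    simpa only [singleton_subset_iff, card_singleton] using
      card_filter_powersetCard_subset {a} S n (singleton_subset_iff.2 ha)
        (by rwa [card_singleton, Nat.one_le_iff_ne_zero])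
  calc ∑ y ∈ S.powersetCard n, ∑ a ∈ y, w a
      = ∑ y ∈ S.powersetCard n, ∑ a ∈ S, if a ∈ y then w a else 0 :=
        sum_congr rfl fun y hy => by
          rw [sum_ite_mem, inter_eq_right.2 (mem_powersetCard.1 hy).1]
    _ = ∑ a ∈ S, #{y ∈ S.powersetCard n | a ∈ y} • w a := by
        rw [sum_comm]
        simp only [← sum_filter, sum_const]
    _ = (#S - 1).choose (n - 1) • ∑ a ∈ S, w a := by
        rw [smul_sum]
        exact sum_congr rfl fun a ha => by rw [hcount a ha]

theorem exists_subset_card_eq_nsmul_sum_le [LinearOrder M] [IsOrderedCancelAddMonoid M]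
    (S : Finset α) (w : α → M) {n : ℕ} (hn : n ≤ #S) :
    ∃ y ⊆ S, #y = n ∧ n • ∑ a ∈ S, w a ≤ #S • ∑ a ∈ y, w a := by
  obtain rfl | hn0 := Nat.eq_zero_or_pos n
  · exact ⟨∅, empty_subset S, card_empty, by simp⟩
  obtain ⟨m, rfl⟩ : ∃ m, n = m + 1 := ⟨n - 1, by omega⟩
  obtain ⟨s, hs⟩ : ∃ s, #S = s + 1 := ⟨#S - 1, by omega⟩
  have hsum : ∑ _y ∈ S.powersetCard (m + 1), (m + 1) • ∑ a ∈ S, w a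
      = ∑ y ∈ S.powersetCard (m + 1), #S • ∑ a ∈ y, w a := by
    rw [sum_const, card_powersetCard, ← smul_sum, sum_powersetCard_sum_eq S w m.add_one_ne_zero,
      smul_smul, smul_smul, hs]
    rw [add_tsub_cancel_right, add_tsub_cancel_right, Nat.add_one_mul_choose_eq]
  obtain ⟨y, hy, hle⟩ := exists_le_of_sum_le (powersetCard_nonempty.2 hn) hsum.le
  exact ⟨y, (mem_powersetCard.1 hy).1, (mem_powersetCard.1 hy).2, hle⟩

end Finset

namespace List

variable {α : Type*} [DecidableEq α]

theorem sum_count_eq_length {C : List α} {S : Finset α} (hC : ∀ c ∈ C, c ∈ S) :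
    ∑ a ∈ S, C.count a = C.length := by
  simpa using Multiset.sum_count_eq_card (m := (C : Multiset α)) hC

theorem length_filter_mem_eq_sum_count (C : List α) (y : Finset α) :
    (C.filter (· ∈ y)).length = ∑ a ∈ y, C.count a := by
  rw [← sum_count_eq_length (C := C.filter (· ∈ y)) (S := y) (by simp)]
  exact sum_congr rfl fun a ha => count_filter (by simpa using ha)

theorem exists_card_eq_mul_length_le_mul_length_filter (C : List α) {S : Finset α}
    (hC : ∀ c ∈ C, c ∈ S) {n : ℕ} (hn : n ≤ #S) :
    ∃ y ⊆ S, #y = n ∧ n * C.length ≤ #S * (C.filter (· ∈ y)).length := by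
  obtain ⟨y, hyS, hy, hle⟩ := exists_subset_card_eq_nsmul_sum_le S C.count hn
  refine ⟨y, hyS, hy, ?_⟩
  simpa only [smul_eq_mul, sum_count_eq_length hC, length_filter_mem_eq_sum_count] using hle

end List

section LCS

variable {α : Type*}

theorem lcsLen_bddAbove (X Y : List α) :
    BddAbove {n | ∃ C : List α, C.Sublist X ∧ C.Sublist Y ∧ C.length = n} :=
  ⟨X.length, by rintro _ ⟨C, hCX, -, rfl⟩; exact hCX.length_le⟩

theorem List.Sublist.length_le_lcsLen {X Y C : List α} (hX : C.Sublist X) (hY : C.Sublist Y) :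
    C.length ≤ lcsLen X Y :=
  le_csSup (lcsLen_bddAbove X Y) ⟨C, hX, hY, rfl⟩

theorem exists_sublist_length_eq_lcsLen (X Y : List α) :
    ∃ C : List α, C.Sublist X ∧ C.Sublist Y ∧ C.length = lcsLen X Y :=
  Nat.sSup_mem (s := {n | ∃ C : List α, C.Sublist X ∧ C.Sublist Y ∧ C.length = n})
    ⟨0, [], X.nil_sublist, Y.nil_sublist, rfl⟩ (lcsLen_bddAbove X Y)

theorem exists_card_eq_mul_lcsLen_le_mul_lcsLen_filter [DecidableEq α] (A B : List α)
    {S : Finset α} (hA : ∀ c ∈ A, c ∈ S) {n : ℕ} (hn : n ≤ #S) :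
    ∃ y ⊆ S, #y = n ∧ n * lcsLen A B ≤ #S * lcsLen (A.filter (· ∈ y)) (B.filter (· ∈ y)) := by
  obtain ⟨C, hCA, hCB, hC⟩ := exists_sublist_length_eq_lcsLen A B
  obtain ⟨y, hyS, hy, hle⟩ :=
    C.exists_card_eq_mul_length_le_mul_length_filter (fun c hc => hA c (hCA.mem hc)) hn
  refine ⟨y, hyS, hy, hC ▸ hle.trans ?_⟩
  exact Nat.mul_le_mul_left _ ((hCA.filter _).length_le_lcsLen (hCB.filter _))

end LCS

theorem subalphabet_approx_reduction_general {α : Type*} [DecidableEq α]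
    (Sig : Finset α) (s ℓ : ℕ) (hcard : Sig.card = s) (hℓs : ℓ < s)
    (ε : ℝ) (hε : 0 < ε) (hεℓ : ε < ℓ)
    (A B : List α) (hA : ∀ c ∈ A, c ∈ Sig) :
    ∃ y : Finset α, y ⊆ Sig ∧ y.card = ℓ ∧
      (lcsLen (A.filter (fun c => decide (c ∈ y)))
              (B.filter (fun c => decide (c ∈ y))) : ℝ) / ((ℓ : ℝ) - ε) ≥
        (lcsLen A B : ℝ) / ((s : ℝ) * (1 - ε / (ℓ : ℝ))) := by
  subst hcard
  obtain ⟨y, hyS, hy, hle⟩ := exists_card_eq_mul_lcsLen_le_mul_lcsLen_filter A B hA hℓs.le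
  refine ⟨y, hyS, hy, ?_⟩
  have hℓ : (0 : ℝ) < ℓ := hε.trans hεℓ
  have hℓε : (0 : ℝ) < ℓ - ε := sub_pos.2 hεℓ
  have hs : (0 : ℝ) < #Sig := hℓ.trans (by exact_mod_cast hℓs)
  have hle' : (ℓ : ℝ) * lcsLen A B ≤ #Sig * lcsLen (A.filter (· ∈ y)) (B.filter (· ∈ y)) := by
    exact_mod_cast hle
  rw [ge_iff_le, show (#Sig : ℝ) * (1 - ε / ℓ) = #Sig * (ℓ - ε) / ℓ by field_simp,
    div_div_eq_mul_div, div_le_div_iff₀ (mul_pos hs hℓε) hℓε]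
  calc (lcsLen A B : ℝ) * ℓ * (ℓ - ε) = ℓ * lcsLen A B * (ℓ - ε) := by ring
    _ ≤ #Sig * lcsLen (A.filter (· ∈ y)) (B.filter (· ∈ y)) * (ℓ - ε) := by gcongr
    _ = _ := by ring

theorem subalphabet_approx_reduction {α : Type*} [DecidableEq α]
    (Sig : Finset α) (s ℓ : ℕ) (hcard : Sig.card = s) (hℓs : ℓ < s)
    (ε : ℝ) (hε : 0 < ε) (hεℓ : ε < ℓ)
    (A B : List α) (hA : ∀ c ∈ A, c ∈ Sig) (hB : ∀ c ∈ B, c ∈ Sig) :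
    ∃ y : Finset α, y ⊆ Sig ∧ y.card = ℓ ∧
      (lcsLen (A.filter (fun c => decide (c ∈ y)))
              (B.filter (fun c => decide (c ∈ y))) : ℝ) / ((ℓ : ℝ) - ε) ≥
        (lcsLen A B : ℝ) / ((s : ℝ) * (1 - ε / (ℓ : ℝ))) :=
  subalphabet_approx_reduction_general Sig s ℓ hcard hℓs ε hε hεℓ A B hA
end
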